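/- Let z₁, z₂, z₃, z₄ be unit complex numbers with z₁z₂z₃z₄ = 1, with z₂ = 1 and z₁ ≠ 1, z₃ ≠ 1, z₄ ≠ 1. Let V = {(a,b,c,d) ∈ ℂ⁴ : a+b+c+d = 0, a + b + z₃c + z₃z₄d = 0}, and define T₁(a,b,c,d) = (z₁z₂a, b + a - z₁a, c, d + z₁a - z₁z₂a) and T₂(a,b,c,d) = (a + z₂b - z₂z₃b, z₂z₃b, c + b - z₂b, d). Then every vector in V that is simultaneously an eigenvector of T₁ and T₂ is a scalar multiple of (1, -1, 0, 0); in particular the span of (1,-1,0,0) is the unique one-dimensional subspace of V invariant under both T₁ and T₂, and the action of the group generated by T₁ and T₂ on V is not semisimple. -/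
import Mathlib


/-- The linear map whose kernel is the ρ-isotypic piece V(ρ) of relative cohomology. -/
def pillowKer (w1 w2 w3 : ℂ) : (Fin 4 → ℂ) →ₗ[ℂ] ℂ × ℂ where
  toFun v := (v 0 + v 1 + v 2 + v 3, v 0 + w1 * v 1 + w2 * v 2 + w3 * v 3)
  map_add' x y := by
    simp only [Pi.add_apply, Prod.mk_add_mk, Prod.mk.injEq, mul_add]
    constructor <;> ring
  map_smul' c x := by
    simp only [Pi.smul_apply, smul_eq_mul, Prod.smul_mk, RingHom.id_apply, Prod.mk.injEq]
    constructor <;> ring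

theorem non_semisimple_case (z1 z2 z3 z4 : ℂ)
    (h1 : ‖z1‖ = 1) (h2 : ‖z2‖ = 1) (h3 : ‖z3‖ = 1) (h4 : ‖z4‖ = 1)
    (hprod : z1 * z2 * z3 * z4 = 1)
    (hz2 : z2 = 1) (hz1 : z1 ≠ 1) (hz3 : z3 ≠ 1) (hz4 : z4 ≠ 1) :
    let Vker := LinearMap.ker (pillowKer z2 (z2 * z3) (z2 * z3 * z4))
    let T1 : (Fin 4 → ℂ) → (Fin 4 → ℂ) := fun v =>
      ![z1 * z2 * v 0, v 1 + v 0 - z1 * v 0, v 2, v 3 + z1 * v 0 - z1 * z2 * v 0]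
    let T2 : (Fin 4 → ℂ) → (Fin 4 → ℂ) := fun v =>
      ![v 0 + z2 * v 1 - z2 * z3 * v 1, z2 * z3 * v 1, v 2 + v 1 - z2 * v 1, v 3]
    let e0 : Fin 4 → ℂ := ![1, -1, 0, 0]
    -- every common eigenvector of T1 and T2 in V is a multiple of (1,-1,0,0)
    (∀ v ∈ Vker, (∃ l m : ℂ, T1 v = l • v ∧ T2 v = m • v) → ∃ c : ℂ, v = c • e0) ∧
    -- the span of (1,-1,0,0) is the unique T1- and T2-invariant line in V
    (∀ W : Submodule ℂ (Fin 4 → ℂ), W ≤ Vker → Module.finrank ℂ W = 1 →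
      (∀ v ∈ W, T1 v ∈ W) → (∀ v ∈ W, T2 v ∈ W) → W = Submodule.span ℂ {e0}) ∧
    -- non-semisimplicity: the invariant line has no invariant complement in V
    ¬∃ W : Submodule ℂ (Fin 4 → ℂ), W ≤ Vker ∧
      (∀ v ∈ W, T1 v ∈ W) ∧ (∀ v ∈ W, T2 v ∈ W) ∧
      W ⊔ Submodule.span ℂ {e0} = Vker ∧ W ⊓ Submodule.span ℂ {e0} = ⊥ := by
  intro Vker T1 T2 e0
  have hz3' : z3 ≠ 0 := fun h => by simp [h] at h3
  have hz1s : z1 - 1 ≠ 0 := sub_ne_zero.mpr hz1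
  have hz3s : z3 - 1 ≠ 0 := sub_ne_zero.mpr hz3
  have hz4s : z4 - 1 ≠ 0 := sub_ne_zero.mpr hz4
  have he0 : e0 ≠ 0 := by
    intro h
    have := congrFun h 0
    simp [e0] at this
  have hmem : ∀ v : Fin 4 → ℂ, v ∈ Vker ↔
      (v 0 + v 1 + v 2 + v 3 = 0 ∧
        v 0 + z2 * v 1 + z2 * z3 * v 2 + z2 * z3 * z4 * v 3 = 0) := by
    intro v
    simp [Vker, LinearMap.mem_ker, pillowKer, Prod.ext_iff]
  -- Part 1
  have part1 : ∀ v ∈ Vker, (∃ l m : ℂ, T1 v = l • v ∧ T2 v = m • v) →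
      ∃ c : ℂ, v = c • e0 := by
    intro v hv hex
    obtain ⟨l, m, hT1, hT2⟩ := hex
    rw [hmem] at hv
    obtain ⟨hk1, hk2⟩ := hv
    rw [hz2] at hk2
    have E1 := congrFun hT1 0
    have E3 := congrFun hT1 2
    have E4 := congrFun hT1 3
    have F2 := congrFun hT2 1
    have F3 := congrFun hT2 2
    have F4 := congrFun hT2 3
    simp only [T1, T2, hz2, Matrix.cons_val_zero, Matrix.cons_val_one, Matrix.head_cons,
      Matrix.cons_val_two, Matrix.tail_cons, Matrix.cons_val_three, Pi.smul_apply,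
      smul_eq_mul, one_mul, mul_one] at E1 E3 E4 F2 F3 F4
    -- if l = 1 and m = 1 then v 2 = 0 and v 3 = 0 fails to hold only via a,b = 0
    have hkey : l = 1 → m = 1 → False → True := fun _ _ h => h.elim
    have hzero : v 2 = 0 ∧ v 3 = 0 := by
      by_cases hc : v 2 = 0
      · refine ⟨hc, ?_⟩
        by_contra hd
        have hl : l = 1 := by
          have h' : (l - 1) * v 3 = 0 := by linear_combination -E4
          exact sub_eq_zero.mp ((mul_eq_zero.mp h').resolve_right hd)
        have hm : m = 1 := by
          have h' : (m - 1) * v 3 = 0 := by linear_combination -F4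
          exact sub_eq_zero.mp ((mul_eq_zero.mp h').resolve_right hd)
        have ha : v 0 = 0 := by
          have h' : (z1 - 1) * v 0 = 0 := by rw [hl] at E1; linear_combination E1
          exact (mul_eq_zero.mp h').resolve_left hz1s
        have hb : v 1 = 0 := by
          have h' : (z3 - 1) * v 1 = 0 := by rw [hm] at F2; linear_combination F2
          exact (mul_eq_zero.mp h').resolve_left hz3s
        apply hd
        have h1' : v 3 = 0 := by
          have : z3 * (z4 - 1) * v 3 = 0 := by
            rw [ha, hb, hc] at hk1 hk2; linear_combination hk2 - z3 * hk1
          rcases mul_eq_zero.mp this with h | h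
          · exact absurd h (mul_ne_zero hz3' hz4s)
          · exact h
        exact h1'
      · exfalso
        have hl : l = 1 := by
          have h' : (l - 1) * v 2 = 0 := by linear_combination -E3
          exact sub_eq_zero.mp ((mul_eq_zero.mp h').resolve_right hc)
        have hm : m = 1 := by
          have h' : (m - 1) * v 2 = 0 := by linear_combination -F3
          exact sub_eq_zero.mp ((mul_eq_zero.mp h').resolve_right hc)
        have ha : v 0 = 0 := by
          have h' : (z1 - 1) * v 0 = 0 := by rw [hl] at E1; linear_combination E1
          exact (mul_eq_zero.mp h').resolve_left hz1s
        have hb : v 1 = 0 := by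
          have h' : (z3 - 1) * v 1 = 0 := by rw [hm] at F2; linear_combination F2
          exact (mul_eq_zero.mp h').resolve_left hz3s
        apply hc
        have : z3 * (z4 - 1) * v 2 = 0 := by
          rw [ha, hb] at hk1 hk2; linear_combination z3 * z4 * hk1 - hk2
        exact (mul_eq_zero.mp this).resolve_left (mul_ne_zero hz3' hz4s)
    obtain ⟨hc, hd⟩ := hzero
    refine ⟨v 0, ?_⟩
    have hb : v 1 = -v 0 := by rw [hc, hd] at hk1; linear_combination hk1
    funext i
    fin_cases i <;>
      simp [e0, hb, hc, hd]
  have part2 : ∀ W : Submodule ℂ (Fin 4 → ℂ), W ≤ Vker → Module.finrank ℂ W = 1 →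
      (∀ v ∈ W, T1 v ∈ W) → (∀ v ∈ W, T2 v ∈ W) → W = Submodule.span ℂ {e0} := by
    intro W hWV hW1 hWT1 hWT2
    have hWne : W ≠ ⊥ := by
      intro h; rw [h] at hW1; simp at hW1
    obtain ⟨v, hvW, hv0⟩ := Submodule.exists_mem_ne_zero_of_ne_bot hWne
    have hsmul : ∀ w ∈ W, ∃ c : ℂ, c • v = w := by
      intro w hw
      obtain ⟨c, hc⟩ := exists_smul_eq_of_finrank_eq_one hW1
        (x := (⟨v, hvW⟩ : W)) (by simpa using hv0) ⟨w, hw⟩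
      exact ⟨c, by simpa [Subtype.ext_iff] using hc⟩
    obtain ⟨l, hl⟩ := hsmul (T1 v) (hWT1 v hvW)
    obtain ⟨m, hm⟩ := hsmul (T2 v) (hWT2 v hvW)
    obtain ⟨c, hc⟩ := part1 v (hWV hvW) ⟨l, m, hl.symm, hm.symm⟩
    have hcne : c ≠ 0 := by rintro rfl; rw [zero_smul] at hc; exact hv0 hc
    have hWspan : W = Submodule.span ℂ {v} := by
      apply le_antisymm
      · intro w hw
        obtain ⟨a, ha⟩ := hsmul w hw
        exact ha ▸ Submodule.smul_mem _ a (Submodule.mem_span_singleton_self v)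
      · rw [Submodule.span_le, Set.singleton_subset_iff]; exact hvW
    rw [hWspan, hc, Submodule.span_singleton_smul_eq (IsUnit.mk0 c hcne)]
  have hsurj : Function.Surjective (pillowKer z2 (z2*z3) (z2*z3*z4)) := by
    rintro ⟨p, q⟩
    refine ⟨![p - (q - p)/(z3 - 1), 0, (q - p)/(z3 - 1), 0], ?_⟩
    simp only [pillowKer, LinearMap.coe_mk, AddHom.coe_mk, Prod.ext_iff, hz2,
      Matrix.cons_val_zero, Matrix.cons_val_one, Matrix.head_cons, Matrix.cons_val_two,
      Matrix.tail_cons, Matrix.cons_val_three, one_mul, mul_zero, add_zero]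
    constructor <;> field_simp <;> ring
  have hVdim : Module.finrank ℂ Vker = 2 := by
    have h := LinearMap.finrank_range_add_finrank_ker (pillowKer z2 (z2*z3) (z2*z3*z4))
    rw [LinearMap.range_eq_top.mpr hsurj] at h
    simp only [finrank_top, Module.finrank_prod, Module.finrank_self,
      Module.finrank_fin_fun] at h
    show Module.finrank ℂ (LinearMap.ker (pillowKer z2 (z2*z3) (z2*z3*z4))) = 2
    omega
  refine ⟨part1, part2, ?_⟩
  rintro ⟨W, hWV, hWT1, hWT2, hsup, hinf⟩
  have hW1 : Module.finrank ℂ W = 1 := by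
    have h := Submodule.finrank_sup_add_finrank_inf_eq W (Submodule.span ℂ {e0})
    rw [hsup, hinf, hVdim, finrank_span_singleton he0] at h
    simp only [finrank_bot, add_zero] at h
    omega
  have hWe := part2 W hWV hW1 hWT1 hWT2
  rw [hWe, inf_idem] at hinf
  exact he0 (Submodule.span_singleton_eq_bot.mp hinf)
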